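/- Kernel characterization: for nonzero ξ ∈ ℝ³ with μ⁰ ≠ 0 and λ⁰+2μ⁰ ≠ 0, a symmetric matrix τ satisfies Γ̂⁰(ξ) : τ = 0 if and only if the vector τ ξ = 0. -/

import Mathlib

open scoped BigOperators

noncomputable section

/-- Kronecker delta on `Fin 3`. -/
def kron (i j : Fin 3) : ℝ := if i = j then 1 else 0

/-- squared Euclidean norm of a frequency vector. -/
def nsq (ξ : Fin 3 → ℝ) : ℝ := ∑ j, ξ j ^ 2

/-- Fourier coefficients of the Green strain operator `Γ̂⁰(ξ)`. -/
def Gamma0 (lam mu : ℝ) (ξ : Fin 3 → ℝ) (i j k l : Fin 3) : ℝ :=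
  (1 / (4 * mu * nsq ξ)) *
      (kron k i * ξ l * ξ j + kron l i * ξ k * ξ j +
        kron k j * ξ l * ξ i + kron l j * ξ k * ξ i) -
    ((lam + mu) / (mu * (lam + 2 * mu))) * (ξ i * ξ j * ξ k * ξ l / (nsq ξ) ^ 2)

/-- Isotropic reference stiffness tensor `C⁰`. -/
def C0 (lam mu : ℝ) (i j k l : Fin 3) : ℝ :=
  lam * kron i j * kron k l + mu * (kron i k * kron j l + kron i l * kron j k)

/-- Double contraction of a fourth-order tensor with a matrix: `(T : τ)_{ij} = Σ_{k,l} T_{ijkl} τ_{kl}`. -/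
def dcontract (T : Fin 3 → Fin 3 → Fin 3 → Fin 3 → ℝ) (τ : Matrix (Fin 3) (Fin 3) ℝ) :
    Matrix (Fin 3) (Fin 3) ℝ :=
  Matrix.of fun i j => ∑ k, ∑ l, T i j k l * τ k l

/-! Writing `w = (τ + τᵀ) ξ`, the contraction `Γ̂⁰(ξ) : τ` is the matrix
`a (w ⊗ ξ + ξ ⊗ w) - b (ξ · w) ξ ⊗ ξ` with `a = 1 / (4μ|ξ|²)` and `b = (λ+μ) / (2μ(λ+2μ)|ξ|⁴)`.
Applying it to `ξ` and pairing with `ξ` gives `|ξ|² (ξ · w) (2a - b|ξ|²)`, and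
`2a - b|ξ|² = 1 / (2(λ+2μ)|ξ|²) ≠ 0`, so `ξ · w = 0`; then the contraction applied to `ξ` is
`a|ξ|² w`, hence `w = 0`. For symmetric `τ`, `w = 2 τ ξ`. -/

open Matrix

section
variable {ι K : Type*} [Fintype ι] [Field K]

theorem sym_vecMulVec_sub_mulVec (a b : K) (v ξ : ι → K) :
    (a • (vecMulVec v ξ + vecMulVec ξ v) - (b * (ξ ⬝ᵥ v)) • vecMulVec ξ ξ) *ᵥ ξ =
      (a * (ξ ⬝ᵥ ξ)) • v + (a * (ξ ⬝ᵥ v) - b * (ξ ⬝ᵥ v) * (ξ ⬝ᵥ ξ)) • ξ := by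
  ext i
  simp only [sub_mulVec, smul_mulVec, add_mulVec, vecMulVec_mulVec, op_smul_eq_smul,
    Pi.add_apply, Pi.sub_apply, Pi.smul_apply, smul_eq_mul, dotProduct_comm v ξ]
  ring

theorem sym_vecMulVec_sub_eq_zero_iff {a b : K} {v ξ : ι → K} (hξ : ξ ⬝ᵥ ξ ≠ 0) (ha : a ≠ 0)
    (hab : 2 * a ≠ b * (ξ ⬝ᵥ ξ)) :
    a • (vecMulVec v ξ + vecMulVec ξ v) - (b * (ξ ⬝ᵥ v)) • vecMulVec ξ ξ = 0 ↔ v = 0 := by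
  refine ⟨fun h => ?_, fun h => by simp [h]⟩
  have hMξ := sym_vecMulVec_sub_mulVec a b v ξ
  rw [h, zero_mulVec] at hMξ
  have hξv : ξ ⬝ᵥ v = 0 := by
    have hpair := congrArg (ξ ⬝ᵥ ·) hMξ
    simp only [dotProduct_zero, dotProduct_add, dotProduct_smul, smul_eq_mul] at hpair
    have : (ξ ⬝ᵥ v) * (ξ ⬝ᵥ ξ) * (2 * a - b * (ξ ⬝ᵥ ξ)) = 0 := by linear_combination -hpair
    simpa [hξ, sub_eq_zero, hab] using this
  rw [hξv] at hMξ
  simpa [ha, hξ] using hMξ.symm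
end

theorem nsq_eq_dotProduct (ξ : Fin 3 → ℝ) : nsq ξ = ξ ⬝ᵥ ξ := by
  simp only [nsq, dotProduct, sq]

theorem dcontract_gamma0 (lam mu : ℝ) (ξ : Fin 3 → ℝ) (τ : Matrix (Fin 3) (Fin 3) ℝ) :
    dcontract (Gamma0 lam mu ξ) τ =
      (1 / (4 * mu * nsq ξ)) •
          (vecMulVec ((τ + τᵀ) *ᵥ ξ) ξ + vecMulVec ξ ((τ + τᵀ) *ᵥ ξ)) -
        ((lam + mu) / (mu * (lam + 2 * mu)) / (2 * nsq ξ ^ 2) * (ξ ⬝ᵥ (τ + τᵀ) *ᵥ ξ)) •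
          vecMulVec ξ ξ := by
  ext i j
  fin_cases i <;> fin_cases j <;>
    simp only [dcontract, Gamma0, kron, Matrix.sub_apply, Matrix.smul_apply, Matrix.add_apply,
      transpose_apply, vecMulVec_apply, mulVec, dotProduct, of_apply, Fin.sum_univ_three,
      Fin.zero_eta, Fin.mk_one, Fin.reduceFinMk, Fin.isValue, Fin.reduceEq, ite_true, ite_false,
      smul_eq_mul] <;>
    ring

theorem dcontract_gamma0_eq_zero_iff {lam mu : ℝ} (hmu : mu ≠ 0) (hlm : lam + 2 * mu ≠ 0)
    {ξ : Fin 3 → ℝ} (hξ : ξ ≠ 0) (τ : Matrix (Fin 3) (Fin 3) ℝ) :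
    dcontract (Gamma0 lam mu ξ) τ = 0 ↔ (τ + τᵀ) *ᵥ ξ = 0 := by
  have hn : ξ ⬝ᵥ ξ ≠ 0 := dotProduct_self_eq_zero.not.mpr hξ
  rw [dcontract_gamma0, nsq_eq_dotProduct]
  refine sym_vecMulVec_sub_eq_zero_iff hn (by simp [hmu, hn]) ?_
  have hgap : 2 * (1 / (4 * mu * (ξ ⬝ᵥ ξ))) -
      (lam + mu) / (mu * (lam + 2 * mu)) / (2 * (ξ ⬝ᵥ ξ) ^ 2) * (ξ ⬝ᵥ ξ) =
        1 / (2 * (lam + 2 * mu) * (ξ ⬝ᵥ ξ)) := by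
    field_simp
    ring
  rw [← sub_ne_zero, hgap]
  simp [hlm, hn]

/-- Kernel characterization: for symmetric `τ`, `Γ̂⁰(ξ) : τ = 0` iff `τ ξ = 0`. -/
theorem gamma0_kernel (lam mu : ℝ) (hmu : mu ≠ 0) (hlm : lam + 2 * mu ≠ 0)
    (ξ : Fin 3 → ℝ) (hξ : ξ ≠ 0)
    (τ : Matrix (Fin 3) (Fin 3) ℝ) (hτ : τ.IsSymm) :
    dcontract (Gamma0 lam mu ξ) τ = 0 ↔ τ.mulVec ξ = 0 := by
  rw [dcontract_gamma0_eq_zero_iff hmu hlm hξ, hτ.eq, ← two_smul ℝ τ, smul_mulVec, smul_eq_zero]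
  simp
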